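/- arXiv:2604.22320 — 3 statements merged into one kernel-verified Lean document; each statement's English description precedes it below -/
import Mathlib

section
/- The functions A_{k,m}(h) = ∏_{j=k}^{m} (1 + h²/j)⁻¹, for k = 1, …, m, are linearly independent as functions on [0,∞): if Σ_{k=1}^m w_k A_{k,m}(h) = 0 for all h ≥ 0 with real coefficients w_k, then w_1 = w_2 = ⋯ = w_m = 0. -/
/-!
Multiplying the relation by `∏_{j=1}^m (1 + x/j)` (with `x = h²`) turns `A_{k,m}` into the
polynomial `P_k(x) = ∏_{j=1}^{k-1} (1 + x/j)`, so `∑ w_k P_k` vanishes on `[0, ∞)` and hence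
everywhere. Since `P_k(-i) = 0` exactly when `i < k`, evaluating at `x = -1, -2, …, -m` gives a
triangular system, which forces `w_1 = w_2 = ⋯ = w_m = 0` in turn.
-/

open Finset Polynomial

theorem prod_Ico_eq_prod_Icc_mul_prod_Icc_inv {K : Type*} [Field K] (f : ℕ → K) {k m : ℕ}
    (hk : 1 ≤ k) (hkm : k ≤ m + 1) (hf : ∀ j ∈ Icc k m, f j ≠ 0) :
    ∏ j ∈ Ico 1 k, f j = (∏ j ∈ Icc 1 m, f j) * ∏ j ∈ Icc k m, (f j)⁻¹ := by
  rw [← Ico_add_one_right_eq_Icc 1, ← prod_Ico_consecutive f hk hkm, Ico_add_one_right_eq_Icc,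
    prod_inv_distrib, mul_assoc, mul_inv_cancel₀ (prod_ne_zero_iff.mpr hf), mul_one]

theorem sum_mul_prod_eq_zero_of_nonneg (s : Finset ℕ) (w : ℕ → ℝ)
    (h : ∀ x : ℝ, 0 ≤ x → ∑ k ∈ s, w k * ∏ j ∈ Ico 1 k, (1 + x / j) = 0) (x : ℝ) :
    ∑ k ∈ s, w k * ∏ j ∈ Ico 1 k, (1 + x / j) = 0 := by
  set Q : ℝ[X] := ∑ k ∈ s, C (w k) * ∏ j ∈ Ico 1 k, (1 + C (j : ℝ)⁻¹ * X)
  have hQ : ∀ y, Q.eval y = ∑ k ∈ s, w k * ∏ j ∈ Ico 1 k, (1 + y / j) := fun y => by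
    simp [Q, eval_finsetSum, eval_prod, div_eq_inv_mul]
  have hQ0 : Q = 0 := eq_zero_of_infinite_isRoot Q <|
    (Set.Ici_infinite (0 : ℝ)).mono fun y hy => (hQ y).trans (h y hy)
  rw [← hQ, hQ0, eval_zero]

theorem one_add_div_eq_zero_iff {K : Type*} [Field K] {x y : K} (hy : y ≠ 0) :
    1 + x / y = 0 ↔ x = -y := by
  rw [add_eq_zero_iff_neg_eq, eq_div_iff hy, neg_one_mul, eq_comm]

theorem prod_Ico_one_add_neg_div_eq_zero_iff (i k : ℕ) :
    ∏ j ∈ Ico 1 k, (1 + (-i : ℝ) / j) = 0 ↔ i ∈ Ico 1 k := by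
  rw [prod_eq_zero_iff]
  constructor
  · rintro ⟨j, hj, hzero⟩
    rw [one_add_div_eq_zero_iff (Nat.cast_ne_zero.mpr (by grind)), neg_inj, Nat.cast_inj] at hzero
    rwa [hzero]
  · intro hi
    exact ⟨i, hi, (one_add_div_eq_zero_iff (Nat.cast_ne_zero.mpr (by grind))).mpr rfl⟩

theorem eq_zero_of_sum_mul_prod_eq_zero (m : ℕ) (w : ℕ → ℝ)
    (h : ∀ x : ℝ, ∑ k ∈ Icc 1 m, w k * ∏ j ∈ Ico 1 k, (1 + x / j) = 0) :
    ∀ k ∈ Icc 1 m, w k = 0 := by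
  intro i hi
  induction i using Nat.strong_induction_on with
  | _ i ih =>
    have hsingle : ∑ k ∈ Icc 1 m, w k * ∏ j ∈ Ico 1 k, (1 + (-i : ℝ) / j)
        = w i * ∏ j ∈ Ico 1 i, (1 + (-i : ℝ) / j) := by
      refine sum_eq_single_of_mem i hi fun k hk hki => ?_
      rcases lt_or_gt_of_ne hki with hlt | hgt
      · rw [ih k hlt hk, zero_mul]
      · rw [(prod_Ico_one_add_neg_div_eq_zero_iff i k).mpr (by grind), mul_zero]
    have hprod : ∏ j ∈ Ico 1 i, (1 + (-i : ℝ) / j) ≠ 0 := by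
      rw [Ne, prod_Ico_one_add_neg_div_eq_zero_iff]; simp
    exact (mul_eq_zero.mp (hsingle ▸ h (-i))).resolve_right hprod

theorem basis_linear_independent_general
    (m : ℕ) (w : ℕ → ℝ)
    (hzero : ∀ h : ℝ, 0 ≤ h →
      ∑ k ∈ Finset.Icc 1 m, w k * ∏ j ∈ Finset.Icc k m, (1 + h ^ 2 / (j : ℝ))⁻¹ = 0) :
    ∀ k ∈ Finset.Icc 1 m, w k = 0 := by
  refine eq_zero_of_sum_mul_prod_eq_zero m w <| sum_mul_prod_eq_zero_of_nonneg _ w fun x hx => ?_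
  have hA := hzero √x (Real.sqrt_nonneg x)
  rw [Real.sq_sqrt hx] at hA
  calc ∑ k ∈ Icc 1 m, w k * ∏ j ∈ Ico 1 k, (1 + x / j)
      = (∏ j ∈ Icc 1 m, (1 + x / j)) * ∑ k ∈ Icc 1 m, w k * ∏ j ∈ Icc k m, (1 + x / j)⁻¹ := by
        rw [mul_sum]
        refine sum_congr rfl fun k hk => ?_
        rw [prod_Ico_eq_prod_Icc_mul_prod_Icc_inv _ (m := m) (mem_Icc.mp hk).1 (by grind)
          fun j _ => by positivity]
        ring
    _ = 0 := by rw [hA, mul_zero]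

theorem basis_linear_independent
    (m : ℕ) (hm : 1 ≤ m) (w : ℕ → ℝ)
    (hzero : ∀ h : ℝ, 0 ≤ h →
      ∑ k ∈ Finset.Icc 1 m, w k * ∏ j ∈ Finset.Icc k m, (1 + h ^ 2 / (j : ℝ))⁻¹ = 0) :
    ∀ k ∈ Finset.Icc 1 m, w k = 0 :=
  basis_linear_independent_general m w hzero
end

section
/- Define 𝒜_m as the set of functions of the form C_m(h) = Σ_{k=1}^m w_k A_{k,m}(h) with w_k ≥ 0, where A_{k,m}(h) = ∏_{j=k}^{m}(1 + h²/j)⁻¹. Then 𝒜_m ⊆ 𝒜_{m+1}; i.e., every function in 𝒜_m can be written as Σ_{k=1}^{m+1} c_k A_{k,m+1}(h) with nonnegative coefficients c_k. -/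
/-!
With `x = h²`, peeling off the factors `j = k` and `j = m + 1` shows
`(m + 1) A_{k,m} = (m + 1 - k) A_{k,m+1} + k A_{k+1,m+1}`, because
`(m + 1 - k) + (k + x) = m + 1 + x`. So every generator of `𝒜_m` is a nonnegative combination
of two neighbouring generators of `𝒜_{m+1}`; collecting coefficients gives
`(m + 1) c_k = (m + 1 - k) w_k + (k - 1) w_{k-1}`.
-/

open Finset

theorem Finset.sum_Icc_add_shift {M : Type*} [AddCommMonoid M] (f g : ℕ → M) (m : ℕ)
    (hf : f (m + 1) = 0) (hg : g 1 = 0) :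
    ∑ k ∈ Icc 1 m, (f k + g (k + 1)) = ∑ k ∈ Icc 1 (m + 1), (f k + g k) := by
  rw [sum_add_distrib, sum_add_distrib, sum_Icc_succ_top (by omega), hf, add_zero,
    ← add_sum_Ioc_eq_sum_Icc (f := g) (by omega : 1 ≤ m + 1), hg, zero_add,
    ← Icc_add_one_left_eq_Ioc, ← map_add_right_Icc, sum_map]
  rfl

/-- `A_{k,m}(h) = sieveProd (h ^ 2) k m`. -/
noncomputable def sieveProd (x : ℝ) (k m : ℕ) : ℝ :=
  ∏ j ∈ Icc k m, (1 + x / j)⁻¹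

theorem succ_mul_sieveProd_eq {x : ℝ} (hx : 0 ≤ x) {k m : ℕ} (hk : 1 ≤ k) (hkm : k ≤ m + 1) :
    (m + 1 : ℝ) * sieveProd x k m
      = ((m + 1 - k : ℕ) : ℝ) * sieveProd x k (m + 1) + k * sieveProd x (k + 1) (m + 1) := by
  have hk0 : (0 : ℝ) < k := by exact_mod_cast hk
  have hextend : sieveProd x k (m + 1) = sieveProd x k m * (1 + x / (m + 1))⁻¹ := by
    rw [sieveProd, prod_Icc_succ_top hkm]
    push_cast
    rfl
  have hpeel : sieveProd x k (m + 1) = (1 + x / k)⁻¹ * sieveProd x (k + 1) (m + 1) := by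
    rw [sieveProd, ← mul_prod_Ioc_eq_prod_Icc (by omega), ← Icc_add_one_left_eq_Ioc]
    rfl
  have hpeel' : sieveProd x (k + 1) (m + 1) = (1 + x / k) * sieveProd x k (m + 1) := by
    rw [hpeel, ← mul_assoc, mul_inv_cancel₀ (by positivity), one_mul]
  rw [hpeel', hextend, Nat.cast_sub hkm]
  field_simp
  push_cast
  ring

theorem succ_mul_sum_sieveProd_eq {x : ℝ} (hx : 0 ≤ x) (w : ℕ → ℝ) (m : ℕ) :
    (m + 1 : ℝ) * ∑ k ∈ Icc 1 m, w k * sieveProd x k m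
      = ∑ k ∈ Icc 1 (m + 1),
          (((m + 1 - k : ℕ) : ℝ) * w k + ((k - 1 : ℕ) : ℝ) * w (k - 1)) * sieveProd x k (m + 1) := by
  have hshift := sum_Icc_add_shift
    (fun k => ((m + 1 - k : ℕ) : ℝ) * w k * sieveProd x k (m + 1))
    (fun k => ((k - 1 : ℕ) : ℝ) * w (k - 1) * sieveProd x k (m + 1)) m (by simp) (by simp)
  simp only [← add_mul] at hshift
  rw [mul_sum, ← hshift]
  refine Finset.sum_congr rfl fun k hk => ?_
  obtain ⟨hk1, hkm⟩ := mem_Icc.mp hk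
  simp only [add_tsub_cancel_right]
  linear_combination w k * succ_mul_sieveProd_eq hx hk1 (by omega : k ≤ m + 1)

theorem sieve_spaces_nested_general
    (m : ℕ) (w : ℕ → ℝ) (hw : ∀ k, 0 ≤ w k) :
    ∃ c : ℕ → ℝ, (∀ k, 0 ≤ c k) ∧
      ∀ h : ℝ, 0 ≤ h →
        ∑ k ∈ Finset.Icc 1 m, w k * ∏ j ∈ Finset.Icc k m, (1 + h ^ 2 / (j : ℝ))⁻¹
          = ∑ k ∈ Finset.Icc 1 (m + 1), c k * ∏ j ∈ Finset.Icc k (m + 1), (1 + h ^ 2 / (j : ℝ))⁻¹ := by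
  -- The truncated subtractions keep `c` nonnegative outside `1 ≤ k ≤ m + 1`.
  refine ⟨fun k => (((m + 1 - k : ℕ) : ℝ) * w k + ((k - 1 : ℕ) : ℝ) * w (k - 1)) / (m + 1),
    fun k => by have := hw k; have := hw (k - 1); positivity, fun h _ => ?_⟩
  simp only [div_mul_eq_mul_div, ← sum_div]
  rw [eq_div_iff (by positivity), mul_comm]
  exact succ_mul_sum_sieveProd_eq (sq_nonneg h) w m

theorem sieve_spaces_nested
    (m : ℕ) (hm : 1 ≤ m) (w : ℕ → ℝ) (hw : ∀ k, 0 ≤ w k) :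
    ∃ c : ℕ → ℝ, (∀ k, 0 ≤ c k) ∧
      ∀ h : ℝ, 0 ≤ h →
        ∑ k ∈ Finset.Icc 1 m, w k * ∏ j ∈ Finset.Icc k m, (1 + h ^ 2 / (j : ℝ))⁻¹
          = ∑ k ∈ Finset.Icc 1 (m + 1), c k * ∏ j ∈ Finset.Icc k (m + 1), (1 + h ^ 2 / (j : ℝ))⁻¹ :=
  sieve_spaces_nested_general m w hw
end

section
/- Let C = Σ_{k=1}^m w_k A_{k,m} with w_k ≥ 0 and L ≤ Σ_k w_k ≤ U, and let Σ_C be the n×n matrix with entries C(‖s_i − s_j‖). Then every eigenvalue λ of Σ_C satisfies L·λ_min(A_{m,m,n}) ≤ λ ≤ U·λ_max(A_{m,m,n}), where A_{m,m,n} is the matrix with entries (1 + ‖s_i − s_j‖²/m)⁻¹. -/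
open Matrix

/-!
Write `A ⊙ B` for the entrywise product and `B_k` for the matrix with entries
`∏_{k ≤ j < m} (1 + ‖s_a - s_b‖² / j)⁻¹`, so that `Σ_C = Σ_k w_k • (A_{m,m,n} ⊙ B_k)`.
Each `B_k` has unit diagonal and is positive semidefinite: the inverse multiquadric
`(1 + r² / c)⁻¹ = ∫₀^∞ e^{-t} e^{-t r² / c} dt` is a mixture of Gaussian kernels, and
`e^{-a‖x - y‖²} = e^{-a‖x‖²} e^{2a⟪x, y⟫} e^{-a‖y‖²}`, where `e^{2a⟪x, y⟫}` is a series of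
Hadamard powers of a Gram matrix. By the Schur product theorem, Hadamard multiplication by a
positive semidefinite matrix with unit diagonal preserves the Loewner bounds
`λ_min • 1 ≤ A ≤ λ_max • 1`, hence `(Σ w_k) λ_min • 1 ≤ Σ_C ≤ (Σ w_k) λ_max • 1`.
-/

open MeasureTheory Set Real
open scoped MatrixOrder ComplexOrder Nat

theorem Real.hasSum_exp (z : ℝ) : HasSum (fun N : ℕ => z ^ N / N !) (exp z) := by
  rw [exp_eq_exp_ℝ]
  exact NormedSpace.expSeries_div_hasSum_exp z

section OrderedAlgebra

variable {A : Type*} [Semiring A] [PartialOrder A] [IsOrderedAddMonoid A] [Algebra ℝ A]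
  [PosSMulMono ℝ A] {ι : Type*} (F : Finset ι) {w : ι → ℝ} {r : ℝ} {M : ι → A}

theorem algebraMap_sum_mul_le_sum_smul (hw : ∀ k ∈ F, 0 ≤ w k)
    (hM : ∀ k ∈ F, algebraMap ℝ A r ≤ M k) :
    algebraMap ℝ A ((∑ k ∈ F, w k) * r) ≤ ∑ k ∈ F, w k • M k := by
  rw [Finset.sum_mul, map_sum]
  refine Finset.sum_le_sum fun k hk => ?_
  rw [map_mul, ← Algebra.smul_def]
  exact smul_le_smul_of_nonneg_left (hM k hk) (hw k hk)

theorem sum_smul_le_algebraMap_sum_mul (hw : ∀ k ∈ F, 0 ≤ w k)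
    (hM : ∀ k ∈ F, M k ≤ algebraMap ℝ A r) :
    ∑ k ∈ F, w k • M k ≤ algebraMap ℝ A ((∑ k ∈ F, w k) * r) := by
  rw [Finset.sum_mul, map_sum]
  refine Finset.sum_le_sum fun k hk => ?_
  rw [map_mul, ← Algebra.smul_def]
  exact smul_le_smul_of_nonneg_left (hM k hk) (hw k hk)

end OrderedAlgebra

namespace Matrix

variable {n : Type*}

section Hadamard

variable {𝕜 : Type*} [RCLike 𝕜]

theorem hadamard_le_hadamard_of_posSemidef_right {A A' B : Matrix n n 𝕜} (h : A ≤ A')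
    (hB : B.PosSemidef) : A ⊙ B ≤ A' ⊙ B := by
  rw [le_iff, show A' ⊙ B - A ⊙ B = (A' - A) ⊙ B by ext; simp [sub_mul]]
  exact (le_iff.1 h).hadamard hB

variable [Fintype n]

theorem posSemidef_entrywise_prod {ι : Type*} (F : Finset ι) {K : ι → Matrix n n 𝕜}
    (hK : ∀ q ∈ F, (K q).PosSemidef) : (of fun i j => ∏ q ∈ F, K q i j).PosSemidef := by
  classical
  induction F using Finset.induction_on with
  | empty => simpa [vecMulVec] using posSemidef_vecMulVec_self_star (fun _ : n => (1 : 𝕜))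
  | insert q F hq ih =>
    have h : (of fun i j => ∏ p ∈ insert q F, K p i j) =
        K q ⊙ of fun i j => ∏ p ∈ F, K p i j := by
      ext i j
      simp [Finset.prod_insert hq]
    rw [h]
    exact (hK q (F.mem_insert_self q)).hadamard
      (ih fun p hp => hK p (Finset.mem_insert_of_mem hp))

theorem PosSemidef.map_pow {A : Matrix n n 𝕜} (hA : A.PosSemidef) (N : ℕ) :
    (A.map (· ^ N)).PosSemidef := by
  have h := posSemidef_entrywise_prod (Finset.range N) (K := fun _ => A) fun _ _ => hA
  simp only [Finset.prod_const, Finset.card_range] at h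
  exact h

variable [DecidableEq n]

theorem algebraMap_hadamard_of_diag_eq_one {B : Matrix n n 𝕜} (hB : ∀ i, B i i = 1) (r : ℝ) :
    algebraMap ℝ (Matrix n n 𝕜) r ⊙ B = algebraMap ℝ (Matrix n n 𝕜) r := by
  rw [Algebra.algebraMap_eq_smul_one, smul_hadamard, one_hadamard_eq_one_iff.2 (funext hB)]

end Hadamard

variable [Fintype n]

namespace IsHermitian

variable {𝕜 : Type*} [RCLike 𝕜] [DecidableEq n] {A B : Matrix n n 𝕜} (hA : A.IsHermitian)
include hA

theorem algebraMap_iInf_eigenvalues_le : algebraMap ℝ _ (⨅ i, hA.eigenvalues i) ≤ A := by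
  refine algebraMap_le_of_le_spectrum (fun x hx => ?_) hA
  obtain ⟨i, rfl⟩ := hA.spectrum_real_eq_range_eigenvalues ▸ hx
  exact ciInf_le (Set.finite_range _).bddBelow i

theorem le_algebraMap_iSup_eigenvalues : A ≤ algebraMap ℝ _ (⨆ i, hA.eigenvalues i) := by
  refine le_algebraMap_of_spectrum_le (fun x hx => ?_) hA
  obtain ⟨i, rfl⟩ := hA.spectrum_real_eq_range_eigenvalues ▸ hx
  exact le_ciSup (Set.finite_range _).bddAbove i

theorem le_eigenvalues_of_algebraMap_le {r : ℝ} (h : algebraMap ℝ _ r ≤ A) (i : n) :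
    r ≤ hA.eigenvalues i :=
  (algebraMap_le_iff_le_spectrum hA).1 h _ (hA.eigenvalues_mem_spectrum_real i)

theorem eigenvalues_le_of_le_algebraMap {r : ℝ} (h : A ≤ algebraMap ℝ _ r) (i : n) :
    hA.eigenvalues i ≤ r :=
  (le_algebraMap_iff_spectrum_le hA).1 h _ (hA.eigenvalues_mem_spectrum_real i)

theorem algebraMap_iInf_eigenvalues_le_hadamard (hB : B.PosSemidef) (hB_diag : ∀ i, B i i = 1) :
    algebraMap ℝ _ (⨅ i, hA.eigenvalues i) ≤ A ⊙ B := by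
  rw [← algebraMap_hadamard_of_diag_eq_one hB_diag]
  exact hadamard_le_hadamard_of_posSemidef_right hA.algebraMap_iInf_eigenvalues_le hB

theorem hadamard_le_algebraMap_iSup_eigenvalues (hB : B.PosSemidef) (hB_diag : ∀ i, B i i = 1) :
    A ⊙ B ≤ algebraMap ℝ _ (⨆ i, hA.eigenvalues i) := by
  rw [← algebraMap_hadamard_of_diag_eq_one hB_diag]
  exact hadamard_le_hadamard_of_posSemidef_right hA.le_algebraMap_iSup_eigenvalues hB

end IsHermitian

theorem star_dotProduct_mulVec_eq_sum (M : Matrix n n ℝ) (x : n → ℝ) :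
    star x ⬝ᵥ (M *ᵥ x) = ∑ i, ∑ j, x i * M i j * x j := by
  simp [dotProduct, mulVec, Finset.mul_sum, mul_comm, mul_left_comm]

theorem PosSemidef.map_exp {A : Matrix n n ℝ} (hA : A.PosSemidef) : (A.map exp).PosSemidef := by
  refine .of_dotProduct_mulVec_nonneg (hA.1.map _ fun _ => rfl) fun x => ?_
  have hsum : HasSum (fun N : ℕ => ∑ i, ∑ j, x i * (A i j ^ N / N !) * x j)
      (∑ i, ∑ j, x i * exp (A i j) * x j) :=
    hasSum_sum fun i _ => hasSum_sum fun j _ => ((hasSum_exp (A i j)).mul_left _).mul_right _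
  rw [star_dotProduct_mulVec_eq_sum]
  refine hsum.nonneg fun N => ?_
  have h := (hA.map_pow N).dotProduct_mulVec_nonneg x
  rw [star_dotProduct_mulVec_eq_sum] at h
  calc 0 ≤ (N ! : ℝ)⁻¹ * ∑ i, ∑ j, x i * A.map (· ^ N) i j * x j :=
        mul_nonneg (by positivity) h
    _ = _ := by
      simp only [Finset.mul_sum, map_apply]
      exact Finset.sum_congr rfl fun i _ => Finset.sum_congr rfl fun j _ => by ring

theorem posSemidef_entrywise_integral {α : Type*} [MeasurableSpace α] {μ : Measure α}
    {K : α → Matrix n n ℝ} (hK : ∀ᵐ t ∂μ, (K t).PosSemidef)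
    (hint : ∀ i j, Integrable (fun t => K t i j) μ) :
    (of fun i j => ∫ t, K t i j ∂μ).PosSemidef := by
  have hterm (x : n → ℝ) (i j : n) : Integrable (fun t => x i * K t i j * x j) μ :=
    ((hint i j).const_mul _).mul_const _
  refine .of_dotProduct_mulVec_nonneg (IsHermitian.ext fun i j => ?_) fun x => ?_
  · simp only [of_apply, star_trivial]
    exact integral_congr_ae (hK.mono fun t ht => ht.1.apply i j)
  · have h : star x ⬝ᵥ ((of fun i j => ∫ t, K t i j ∂μ) *ᵥ x) =
        ∫ t, star x ⬝ᵥ (K t *ᵥ x) ∂μ := by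
      simp only [star_dotProduct_mulVec_eq_sum, of_apply]
      rw [integral_finsetSum _ fun i _ => integrable_finsetSum _ fun j _ => hterm x i j]
      refine Finset.sum_congr rfl fun i _ => ?_
      rw [integral_finsetSum _ fun j _ => hterm x i j]
      exact Finset.sum_congr rfl fun j _ => by rw [integral_mul_const, integral_const_mul]
    rw [h]
    exact integral_nonneg_of_ae (hK.mono fun t ht => ht.dotProduct_mulVec_nonneg x)

section Kernels

variable {E : Type*} [NormedAddCommGroup E] [InnerProductSpace ℝ E] (s : n → E)

theorem posSemidef_exp_neg_mul_dist_sq {a : ℝ} (ha : 0 ≤ a) :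
    (of fun i j => exp (-(a * dist (s i) (s j) ^ 2))).PosSemidef := by
  classical
  let D : Matrix n n ℝ := diagonal fun i => exp (-(a * ‖s i‖ ^ 2))
  have h : (of fun i j => exp (-(a * dist (s i) (s j) ^ 2))) =
      D * ((2 * a) • gram ℝ s).map exp * Dᴴ := by
    ext i j
    simp only [D, of_apply, diagonal_mul, diagonal_conjTranspose, mul_diagonal, map_apply,
      smul_apply, gram_apply, smul_eq_mul, star_trivial, dist_eq_norm, norm_sub_sq_real,
      ← Real.exp_add]
    ring_nf
  rw [h]
  exact (((posSemidef_gram ℝ s).smul (by positivity)).map_exp).mul_mul_conjTranspose_same D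

theorem posSemidef_inv_one_add_dist_sq_div {c : ℝ} (hc : 0 ≤ c) :
    (of fun i j => (1 + dist (s i) (s j) ^ 2 / c)⁻¹).PosSemidef := by
  have hb (i j : n) : -(1 + dist (s i) (s j) ^ 2 / c) < 0 := neg_lt_zero.2 (by positivity)
  have hexp (i j : n) (t : ℝ) : exp (-t) * exp (-(t / c * dist (s i) (s j) ^ 2)) =
      exp (-(1 + dist (s i) (s j) ^ 2 / c) * t) := by
    rw [← Real.exp_add]
    ring_nf
  have h := posSemidef_entrywise_integral (μ := volume.restrict (Ioi 0))
    (K := fun t => exp (-t) • of fun i j => exp (-(t / c * dist (s i) (s j) ^ 2)))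
    ((ae_restrict_iff' measurableSet_Ioi).2 (.of_forall fun t ht =>
      (posSemidef_exp_neg_mul_dist_sq s (div_nonneg (le_of_lt ht) hc)).smul (exp_pos _).le))
    (fun i j => by
      simp only [smul_apply, of_apply, smul_eq_mul, hexp]
      exact integrableOn_exp_mul_Ioi (hb i j) 0)
  convert h using 2
  funext i j
  simp only [smul_apply, of_apply, smul_eq_mul, hexp]
  rw [integral_exp_mul_Ioi (hb i j), mul_zero, exp_zero, neg_div_neg_eq, one_div]

end Kernels

end Matrix

theorem sieve_cov_matrix_eigenvalue_bounds_general
    (d n m : ℕ) (s : Fin n → EuclideanSpace ℝ (Fin d))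
    (w : ℕ → ℝ) (hw : ∀ k, 0 ≤ w k)
    (L U : ℝ) (hL : L ≤ ∑ k ∈ Finset.Icc 1 m, w k) (hU : ∑ k ∈ Finset.Icc 1 m, w k ≤ U)
    (C : ℝ → ℝ)
    (hC : ∀ h, C h = ∑ k ∈ Finset.Icc 1 m,
      w k * ∏ j ∈ Finset.Icc k m, (1 + h ^ 2 / (j : ℝ))⁻¹)
    (SC Amm : Matrix (Fin n) (Fin n) ℝ)
    (hSC : ∀ i j, SC i j = C (dist (s i) (s j)))
    (hAmm : ∀ i j, Amm i j = (1 + dist (s i) (s j) ^ 2 / (m : ℝ))⁻¹) :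
    ∀ (hS : SC.IsHermitian) (hA : Amm.IsHermitian), ∀ i : Fin n,
      L * (⨅ j, hA.eigenvalues j) ≤ hS.eigenvalues i ∧
      hS.eigenvalues i ≤ U * (⨆ j, hA.eigenvalues j) := by
  intro hS hA i
  have hAmm_psd : Amm.PosSemidef := by
    convert posSemidef_inv_one_add_dist_sq_div s m.cast_nonneg
    exact ext fun a b => hAmm a b
  let B (k : ℕ) : Matrix (Fin n) (Fin n) ℝ :=
    of fun a b => ∏ q ∈ Finset.Ico k m, (1 + dist (s a) (s b) ^ 2 / (q : ℝ))⁻¹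
  have hB (k : ℕ) : (B k).PosSemidef :=
    posSemidef_entrywise_prod _ fun q _ => posSemidef_inv_one_add_dist_sq_div s q.cast_nonneg
  have hB_diag (k : ℕ) (a : Fin n) : B k a a = 1 := by simp [B]
  have hSC_eq : SC = ∑ k ∈ Finset.Icc 1 m, w k • (Amm ⊙ B k) := by
    ext a b
    simp only [hSC, hC, Matrix.sum_apply, Matrix.smul_apply, hadamard_apply, hAmm, B, of_apply,
      smul_eq_mul]
    exact Finset.sum_congr rfl fun k hk => by
      rw [← Finset.mul_prod_Ico_eq_prod_Icc (Finset.mem_Icc.1 hk).2]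
  have hlo := algebraMap_sum_mul_le_sum_smul (Finset.Icc 1 m) (fun k _ => hw k)
    fun k _ => hA.algebraMap_iInf_eigenvalues_le_hadamard (hB k) (hB_diag k)
  have hhi := sum_smul_le_algebraMap_sum_mul (Finset.Icc 1 m) (fun k _ => hw k)
    fun k _ => hA.hadamard_le_algebraMap_iSup_eigenvalues (hB k) (hB_diag k)
  rw [← hSC_eq] at hlo hhi
  have hA_nonneg (j : Fin n) : 0 ≤ hA.eigenvalues j := hAmm_psd.eigenvalues_nonneg j
  exact ⟨(mul_le_mul_of_nonneg_right hL (Real.iInf_nonneg hA_nonneg)).trans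
      (hS.le_eigenvalues_of_algebraMap_le hlo i),
    (hS.eigenvalues_le_of_le_algebraMap hhi i).trans
      (mul_le_mul_of_nonneg_right hU (Real.iSup_nonneg hA_nonneg))⟩

theorem sieve_cov_matrix_eigenvalue_bounds
    (d n m : ℕ) (hm : 1 ≤ m) (s : Fin n → EuclideanSpace ℝ (Fin d))
    (w : ℕ → ℝ) (hw : ∀ k, 0 ≤ w k)
    (L U : ℝ) (hL : L ≤ ∑ k ∈ Finset.Icc 1 m, w k) (hU : ∑ k ∈ Finset.Icc 1 m, w k ≤ U)
    (C : ℝ → ℝ)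
    (hC : ∀ h, C h = ∑ k ∈ Finset.Icc 1 m,
      w k * ∏ j ∈ Finset.Icc k m, (1 + h ^ 2 / (j : ℝ))⁻¹)
    (SC Amm : Matrix (Fin n) (Fin n) ℝ)
    (hSC : ∀ i j, SC i j = C (dist (s i) (s j)))
    (hAmm : ∀ i j, Amm i j = (1 + dist (s i) (s j) ^ 2 / (m : ℝ))⁻¹) :
    ∀ (hS : SC.IsHermitian) (hA : Amm.IsHermitian), ∀ i : Fin n,
      L * (⨅ j, hA.eigenvalues j) ≤ hS.eigenvalues i ∧
      hS.eigenvalues i ≤ U * (⨆ j, hA.eigenvalues j) :=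
  sieve_cov_matrix_eigenvalue_bounds_general d n m s w hw L U hL hU C hC SC Amm hSC hAmm
end
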